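/- If d is a continuous metric on the projective space of a Hilbert space of dimension D, then the infimum defining W_p^d(ρ,σ) is attained by a transport plan with at most 2D² elements. -/

import Mathlib

/-!
Allowing zero weights, the plans indexed by `Fin (2 * D ^ 2)` form a compact set on which the
cost is continuous, so the cost attains its minimum there. Every plan is dominated by such a
plan: the pairs `(|ψ⟩⟨ψ|, |φ⟩⟨φ|)` live in a real vector space of dimension `2 * D ^ 2`, so a
longer plan admits a linear relation among its pairs, and moving the weights along that relation,
in the direction that does not increase the cost, until one of them vanishes shortens the plan.
-/


open scoped BigOperators ComplexOrder
open Matrix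

noncomputable section

abbrev QV (D : ℕ) := EuclideanSpace ℂ (Fin D)

def qproj {D : ℕ} (ψ : QV D) : Matrix (Fin D) (Fin D) ℂ :=
  Matrix.of fun i j => ψ i * (starRingEnd ℂ) (ψ j)

/-- A quantum transport plan between `ρ` and `σ`. -/
structure TPlan (D : ℕ) (ρ σ : Matrix (Fin D) (Fin D) ℂ) where
  n : ℕ
  q : Fin n → ℝ
  ψ : Fin n → QV D
  φ : Fin n → QV D
  q_pos : ∀ j, 0 < q j
  ψ_unit : ∀ j, ‖ψ j‖ = 1
  φ_unit : ∀ j, ‖φ j‖ = 1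
  margL : ∑ j, (q j : ℂ) • qproj (ψ j) = ρ
  margR : ∑ j, (q j : ℂ) • qproj (φ j) = σ

/-- p-th order transport cost of a plan (before the 1/p root). -/
def Tcost {D : ℕ} (d : QV D → QV D → ℝ) (p : ℝ) {ρ σ : Matrix (Fin D) (Fin D) ℂ}
    (Q : TPlan D ρ σ) : ℝ :=
  ∑ j, Q.q j * d (Q.ψ j) (Q.φ j) ^ p

/-- The order-p quantum Wasserstein distance. -/
def Wp {D : ℕ} (d : QV D → QV D → ℝ) (p : ℝ) (ρ σ : Matrix (Fin D) (Fin D) ℂ) : ℝ :=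
  sInf { x | ∃ Q : TPlan D ρ σ, x = (Tcost d p Q) ^ (1/p) }

/-- The infinite-order quantum Wasserstein distance. -/
def Winf {D : ℕ} (d : QV D → QV D → ℝ) (ρ σ : Matrix (Fin D) (Fin D) ℂ) : ℝ :=
  sInf { x | ∃ Q : TPlan D ρ σ, x = ⨆ j, d (Q.ψ j) (Q.φ j) }

def IsDensity {D : ℕ} (ρ : Matrix (Fin D) (Fin D) ℂ) : Prop :=
  ρ.PosSemidef ∧ ρ.trace = 1

/-- Hilbert–Schmidt (Frobenius) norm. -/
def frob {D : ℕ} (A : Matrix (Fin D) (Fin D) ℂ) : ℝ :=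
  Real.sqrt (∑ i, ∑ j, ‖A i j‖ ^ 2)

/-- Action of a matrix on a vector of the Euclidean space. -/
def act {D : ℕ} (U : Matrix (Fin D) (Fin D) ℂ) (ψ : QV D) : QV D :=
  (EuclideanSpace.equiv (Fin D) ℂ).symm (U.mulVec (EuclideanSpace.equiv (Fin D) ℂ ψ))

/-- Dual Lipschitz constant of an observable. -/
def Ld {D : ℕ} (d : QV D → QV D → ℝ) (O : Matrix (Fin D) (Fin D) ℂ) : ℝ :=
  sSup { x | ∃ ρ σ : Matrix (Fin D) (Fin D) ℂ, IsDensity ρ ∧ IsDensity σ ∧ ρ ≠ σ ∧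
    x = ((O * (ρ - σ)).trace).re / Wp d 1 ρ σ }

/-- Double-dual norm. -/
def DWnorm {D : ℕ} (d : QV D → QV D → ℝ) (X : Matrix (Fin D) (Fin D) ℂ) : ℝ :=
  sSup { x | ∃ O : Matrix (Fin D) (Fin D) ℂ, O.IsHermitian ∧ O.trace = 0 ∧ Ld d O ≤ 1 ∧
    x = ((O * X).trace).re }

/-- Trace (nuclear) norm. -/
def traceNorm {D : ℕ} (A : Matrix (Fin D) (Fin D) ℂ) : ℝ :=
  ((Matrix.isHermitian_conjTranspose_mul_self A).eigenvectorUnitary.1 *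
    Matrix.diagonal ((fun r : ℝ => (r : ℂ)) ∘ (Real.sqrt ·) ∘ (Matrix.isHermitian_conjTranspose_mul_self A).eigenvalues) *
    (star (Matrix.isHermitian_conjTranspose_mul_self A).eigenvectorUnitary : Matrix (Fin D) (Fin D) ℂ)).trace.re

lemma isHermitian_qproj {D : ℕ} (ψ : QV D) : (qproj ψ).IsHermitian := by
  ext i j
  simp [qproj, mul_comm]

lemma trace_qproj {D : ℕ} (ψ : QV D) : (qproj ψ).trace = (‖ψ‖ ^ 2 : ℝ) := by
  simp [Matrix.trace, qproj, EuclideanSpace.norm_sq_eq, Complex.mul_conj, Complex.normSq_eq_norm_sq]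

@[fun_prop]
lemma continuous_qproj {D : ℕ} : Continuous (qproj : QV D → Matrix (Fin D) (Fin D) ℂ) := by
  unfold qproj
  fun_prop

lemma Matrix.IsHermitian.eq_zero_of_re_add_im_eq_zero {n : Type*} {A : Matrix n n ℂ}
    (hA : A.IsHermitian) (h : ∀ i j, (A i j).re + (A i j).im = 0) : A = 0 := by
  ext i j
  have hij := h i j
  have hji := h j i
  rw [← hA.apply j i, Complex.star_def, Complex.conj_re, Complex.conj_im] at hji
  apply Complex.ext <;> simp <;> linarith

lemma isHermitian_sum_ofReal_smul {n ι : Type*} [Fintype ι] (c : ι → ℝ)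
    {A : ι → Matrix n n ℂ} (hA : ∀ j, (A j).IsHermitian) :
    (∑ j, (c j : ℂ) • A j).IsHermitian :=
  isSelfAdjoint_sum _ fun j _ => IsSelfAdjoint.smul (Complex.conj_ofReal (c j)) (hA j)

lemma exists_ne_zero_sum_smul_qproj_eq_zero {D : ℕ} {ι : Type*} [Fintype ι]
    (hι : 2 * D ^ 2 < Fintype.card ι) (ψ φ : ι → QV D) :
    ∃ c : ι → ℝ, c ≠ 0 ∧ ∑ j, (c j : ℂ) • qproj (ψ j) = 0 ∧
      ∑ j, (c j : ℂ) • qproj (φ j) = 0 := by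
  -- `A ↦ re A + im A` is ℝ-linear and injective on Hermitian matrices.
  let L : Matrix (Fin D) (Fin D) ℂ →ₗ[ℝ] Matrix (Fin D) (Fin D) ℝ :=
    (Complex.reLm + Complex.imLm).mapMatrix
  have hL : ∀ (c : ι → ℝ) (χ : ι → QV D), L (∑ j, (c j : ℂ) • qproj (χ j)) =
      ∑ j, c j • L (qproj (χ j)) := fun c χ => by
    simp only [map_sum, ← map_smul, Complex.coe_smul]
  have hdep : ¬ LinearIndependent ℝ fun j => (L (qproj (ψ j)), L (qproj (φ j))) := fun hli => by
    have := hli.fintype_card_le_finrank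
    simp only [Module.finrank_prod, Module.finrank_matrix, Module.finrank_self,
      Fintype.card_fin] at this
    nlinarith
  obtain ⟨c, hc, j, hj⟩ := Fintype.not_linearIndependent_iff.mp hdep
  have hc1 : ∑ j, c j • L (qproj (ψ j)) = 0 := by
    simpa only [Prod.fst_sum, Prod.smul_fst, Prod.fst_zero] using congrArg Prod.fst hc
  have hc2 : ∑ j, c j • L (qproj (φ j)) = 0 := by
    simpa only [Prod.snd_sum, Prod.smul_snd, Prod.snd_zero] using congrArg Prod.snd hc
  refine ⟨c, fun h => hj (congrFun h j), ?_, ?_⟩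
  all_goals
    refine (isHermitian_sum_ofReal_smul c fun j => isHermitian_qproj _).eq_zero_of_re_add_im_eq_zero
      fun a b => ?_
  · exact congrFun₂ ((hL c ψ).trans hc1) a b
  · exact congrFun₂ ((hL c φ).trans hc2) a b

lemma trace_sum_smul_qproj {D : ℕ} {ι : Type*} [Fintype ι] (c : ι → ℝ) {ψ : ι → QV D}
    (hψ : ∀ j, ‖ψ j‖ = 1) : (∑ j, (c j : ℂ) • qproj (ψ j)).trace = ∑ j, (c j : ℂ) := by
  simp [Matrix.trace_sum, trace_qproj, hψ]

structure IsWeakPlan {D : ℕ} {ι : Type*} [Fintype ι] (ρ σ : Matrix (Fin D) (Fin D) ℂ)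
    (q : ι → ℝ) (ψ φ : ι → QV D) : Prop where
  nonneg : ∀ j, 0 ≤ q j
  norm_left : ∀ j, ‖ψ j‖ = 1
  norm_right : ∀ j, ‖φ j‖ = 1
  margL : ∑ j, (q j : ℂ) • qproj (ψ j) = ρ
  margR : ∑ j, (q j : ℂ) • qproj (φ j) = σ

def planCost {D : ℕ} {ι : Type*} [Fintype ι] (d : QV D → QV D → ℝ) (p : ℝ) (q : ι → ℝ)
    (ψ φ : ι → QV D) : ℝ :=
  ∑ j, q j * d (ψ j) (φ j) ^ p

section WeakPlan

variable {D : ℕ} {ι κ : Type*} [Fintype ι] [Fintype κ] {ρ σ : Matrix (Fin D) (Fin D) ℂ}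
  {q : ι → ℝ} {ψ φ : ι → QV D}

lemma TPlan.isWeakPlan (Q : TPlan D ρ σ) : IsWeakPlan ρ σ Q.q Q.ψ Q.φ :=
  ⟨fun j => (Q.q_pos j).le, Q.ψ_unit, Q.φ_unit, Q.margL, Q.margR⟩

lemma TPlan.tcost_eq_planCost (d : QV D → QV D → ℝ) (p : ℝ) (Q : TPlan D ρ σ) :
    Tcost d p Q = planCost d p Q.q Q.ψ Q.φ :=
  rfl

lemma IsWeakPlan.comp_equiv (h : IsWeakPlan ρ σ q ψ φ) (e : κ ≃ ι) :
    IsWeakPlan ρ σ (q ∘ e) (ψ ∘ e) (φ ∘ e) :=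
  ⟨fun _ => h.nonneg _, fun _ => h.norm_left _, fun _ => h.norm_right _,
    (e.sum_comp fun j => (q j : ℂ) • qproj (ψ j)).trans h.margL,
    (e.sum_comp fun j => (q j : ℂ) • qproj (φ j)).trans h.margR⟩

lemma planCost_comp_equiv (d : QV D → QV D → ℝ) (p : ℝ) (e : κ ≃ ι) :
    planCost d p (q ∘ e) (ψ ∘ e) (φ ∘ e) = planCost d p q ψ φ :=
  e.sum_comp fun j => q j * d (ψ j) (φ j) ^ p

lemma IsWeakPlan.sumElim (h : IsWeakPlan ρ σ q ψ φ) {χ : κ → QV D} (hχ : ∀ k, ‖χ k‖ = 1) :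
    IsWeakPlan ρ σ (Sum.elim q 0) (Sum.elim ψ χ) (Sum.elim φ χ) where
  nonneg := by rintro (j | k) <;> simp [h.nonneg]
  norm_left := by rintro (j | k) <;> simp [h.norm_left, hχ]
  norm_right := by rintro (j | k) <;> simp [h.norm_right, hχ]
  margL := by simpa [Fintype.sum_sum_type] using h.margL
  margR := by simpa [Fintype.sum_sum_type] using h.margR

lemma planCost_sumElim_zero (d : QV D → QV D → ℝ) (p : ℝ) (χ : κ → QV D) :
    planCost d p (Sum.elim q 0) (Sum.elim ψ χ) (Sum.elim φ χ) = planCost d p q ψ φ := by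
  simp [planCost, Fintype.sum_sum_type]

lemma IsWeakPlan.exists_tPlan (h : IsWeakPlan ρ σ q ψ φ) :
    ∃ Q : TPlan D ρ σ, Q.n = Fintype.card {j // q j ≠ 0} ∧
      ∀ d p, Tcost d p Q = planCost d p q ψ φ := by
  classical
  let e := (Fintype.equivFin {j // q j ≠ 0}).symm
  have hsum : ∀ {M : Type} [AddCommMonoid M] (f : ι → M), (∀ j, q j = 0 → f j = 0) →
      ∑ i, f (e i) = ∑ j, f j := fun f hf =>
    (e.sum_comp fun j => f j).trans
      (Finset.sum_congr_set {j | q j ≠ 0} f _ (fun _ _ => rfl) fun j hj =>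
        hf j (by simpa using hj)).symm
  refine ⟨⟨_, fun i => q (e i), fun i => ψ (e i), fun i => φ (e i),
    fun i => (h.nonneg _).lt_of_ne' (e i).2, fun i => h.norm_left _, fun i => h.norm_right _,
    ?_, ?_⟩, rfl, fun d p => ?_⟩
  · exact (hsum _ fun j hj => by simp [hj]).trans h.margL
  · exact (hsum _ fun j hj => by simp [hj]).trans h.margR
  · exact hsum (fun j => q j * d (ψ j) (φ j) ^ p) fun j hj => by simp [hj]

lemma IsWeakPlan.sum_weights (h : IsWeakPlan ρ σ q ψ φ) : ∑ j, (q j : ℂ) = ρ.trace := by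
  rw [← h.margL, trace_sum_smul_qproj q h.norm_left]

lemma IsWeakPlan.prod {a : ι → ℝ} {u : ι → QV D} {b : κ → ℝ} {v : κ → QV D}
    (ha : IsWeakPlan ρ ρ a u u) (hb : IsWeakPlan σ σ b v v) (hρ : ρ.trace = 1)
    (hσ : σ.trace = 1) :
    IsWeakPlan ρ σ (fun x : ι × κ => a x.1 * b x.2) (fun x => u x.1) (fun x => v x.2) where
  nonneg x := mul_nonneg (ha.nonneg _) (hb.nonneg _)
  norm_left x := ha.norm_left _
  norm_right x := hb.norm_left _
  margL := by
    rw [Fintype.sum_prod_type, ← ha.margL]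
    refine Finset.sum_congr rfl fun i _ => ?_
    simp_rw [Complex.ofReal_mul, mul_comm (a i : ℂ), mul_smul, ← Finset.sum_smul, hb.sum_weights,
      hσ, one_smul]
  margR := by
    rw [Fintype.sum_prod_type_right, ← hb.margL]
    refine Finset.sum_congr rfl fun k _ => ?_
    simp_rw [Complex.ofReal_mul, mul_smul, ← Finset.sum_smul, ha.sum_weights, hρ, one_smul]

end WeakPlan

lemma exists_nonneg_sub_mul_eq_zero {ι : Type*} [Fintype ι] {q c : ι → ℝ} (hq : ∀ j, 0 ≤ q j)
    (hc : ∃ j, 0 < c j) : ∃ t, 0 ≤ t ∧ (∀ j, 0 ≤ q j - t * c j) ∧ ∃ j, q j - t * c j = 0 := by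
  classical
  obtain ⟨j₀, hj₀, hmin⟩ := Finset.exists_min_image {j | 0 < c j} (fun j => q j / c j)
    (by simpa [Finset.Nonempty] using hc)
  have hc₀ : 0 < c j₀ := by simpa using hj₀
  refine ⟨q j₀ / c j₀, div_nonneg (hq j₀) hc₀.le, fun j => ?_, j₀, by field_simp; ring⟩
  rcases le_or_gt (c j) 0 with hcj | hcj
  · nlinarith [div_nonneg (hq j₀) hc₀.le, hq j]
  · have := hmin j (by simpa using hcj)
    rw [le_div_iff₀ hcj] at this
    linarith

section Reduction

variable {D : ℕ} {ι : Type*} [Fintype ι] {ρ σ : Matrix (Fin D) (Fin D) ℂ}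
  {q : ι → ℝ} {ψ φ : ι → QV D}

lemma IsWeakPlan.sub_mul (h : IsWeakPlan ρ σ q ψ φ) {c : ι → ℝ} {t : ℝ}
    (hψ : ∑ j, (c j : ℂ) • qproj (ψ j) = 0) (hφ : ∑ j, (c j : ℂ) • qproj (φ j) = 0)
    (hnonneg : ∀ j, 0 ≤ q j - t * c j) : IsWeakPlan ρ σ (fun j => q j - t * c j) ψ φ := by
  have key : ∀ χ : ι → QV D, ∑ j, (c j : ℂ) • qproj (χ j) = 0 →
      ∑ j, ((q j - t * c j : ℝ) : ℂ) • qproj (χ j) = ∑ j, (q j : ℂ) • qproj (χ j) := fun χ hχ => by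
    simp only [Complex.ofReal_sub, Complex.ofReal_mul, sub_smul, mul_smul, Finset.sum_sub_distrib,
      ← Finset.smul_sum, hχ, smul_zero, sub_zero]
  exact ⟨hnonneg, h.norm_left, h.norm_right, (key ψ hψ).trans h.margL, (key φ hφ).trans h.margR⟩

lemma planCost_sub_mul (d : QV D → QV D → ℝ) (p t : ℝ) (c : ι → ℝ) :
    planCost d p (fun j => q j - t * c j) ψ φ = planCost d p q ψ φ - t * planCost d p c ψ φ := by
  simp only [planCost, Finset.mul_sum, ← Finset.sum_sub_distrib]
  exact Finset.sum_congr rfl fun j _ => by ring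

lemma IsWeakPlan.exists_tPlan_card_lt (h : IsWeakPlan ρ σ q ψ φ) (d : QV D → QV D → ℝ) (p : ℝ)
    (hι : 2 * D ^ 2 < Fintype.card ι) :
    ∃ Q : TPlan D ρ σ, Q.n < Fintype.card ι ∧ Tcost d p Q ≤ planCost d p q ψ φ := by
  obtain ⟨c, hc, hcψ, hcφ⟩ := exists_ne_zero_sum_smul_qproj_eq_zero hι ψ φ
  wlog hcost : 0 ≤ planCost d p c ψ φ generalizing c
  · refine this (-c) (neg_ne_zero.mpr hc) ?_ ?_ ?_
    · simpa [neg_smul] using hcψ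
    · simpa [neg_smul] using hcφ
    · simp only [planCost, Pi.neg_apply, neg_mul, Finset.sum_neg_distrib] at hcost ⊢
      linarith
  have hsum : ∑ j, c j = 0 := by
    have := trace_sum_smul_qproj c h.norm_left
    rw [hcψ, Matrix.trace_zero] at this
    exact_mod_cast this.symm
  obtain ⟨j, -, hj⟩ := Finset.exists_pos_of_sum_zero_of_exists_nonzero c hsum
    (by simpa [funext_iff] using hc)
  obtain ⟨t, ht, hnonneg, j₀, hj₀⟩ := exists_nonneg_sub_mul_eq_zero h.nonneg ⟨j, hj⟩
  obtain ⟨Q, hQn, hQcost⟩ := (h.sub_mul hcψ hcφ hnonneg).exists_tPlan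
  refine ⟨Q, hQn ▸ Fintype.card_subtype_lt (not_not.mpr hj₀), ?_⟩
  rw [hQcost, planCost_sub_mul]
  nlinarith

lemma TPlan.exists_card_le (d : QV D → QV D → ℝ) (p : ℝ) (Q : TPlan D ρ σ) :
    ∃ Q' : TPlan D ρ σ, Q'.n ≤ 2 * D ^ 2 ∧ Tcost d p Q' ≤ Tcost d p Q := by
  induction hn : Q.n using Nat.strong_induction_on generalizing Q with
  | _ n ih =>
    by_cases hQ : Q.n ≤ 2 * D ^ 2
    · exact ⟨Q, hQ, le_rfl⟩
    obtain ⟨Q₁, hQ₁n, hQ₁⟩ := Q.isWeakPlan.exists_tPlan_card_lt d p (by simpa using hQ)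
    obtain ⟨Q', hQ'n, hQ'⟩ := ih Q₁.n (by simpa [hn] using hQ₁n) Q₁ rfl
    exact ⟨Q', hQ'n, hQ'.trans hQ₁⟩

end Reduction

lemma Matrix.IsHermitian.sum_eigenvalues_smul_qproj {D : ℕ} {A : Matrix (Fin D) (Fin D) ℂ}
    (hA : A.IsHermitian) : ∑ k, (hA.eigenvalues k : ℂ) • qproj (hA.eigenvectorBasis k) = A := by
  conv_rhs => rw [hA.spectral_theorem]
  ext i j
  rw [Unitary.conjStarAlgAut_apply, Matrix.mul_apply]
  simp only [Matrix.mul_diagonal, qproj,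
    Matrix.sum_apply, Matrix.smul_apply, Matrix.of_apply, Matrix.star_apply,
    Matrix.IsHermitian.eigenvectorUnitary_apply, Function.comp_apply, smul_eq_mul,
    RCLike.ofReal_eq_complex_ofReal]
  exact Finset.sum_congr rfl fun k _ => by rw [Complex.star_def]; ring

lemma Matrix.PosSemidef.isWeakPlan_eigenvectorBasis {D : ℕ} {A : Matrix (Fin D) (Fin D) ℂ}
    (hA : A.PosSemidef) :
    IsWeakPlan A A hA.1.eigenvalues hA.1.eigenvectorBasis hA.1.eigenvectorBasis :=
  ⟨hA.eigenvalues_nonneg, hA.1.eigenvectorBasis.norm_eq_one, hA.1.eigenvectorBasis.norm_eq_one,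
    hA.1.sum_eigenvalues_smul_qproj, hA.1.sum_eigenvalues_smul_qproj⟩

lemma nonempty_tPlan {D : ℕ} {ρ σ : Matrix (Fin D) (Fin D) ℂ} (hρ : IsDensity ρ)
    (hσ : IsDensity σ) : Nonempty (TPlan D ρ σ) :=
  let ⟨Q, _⟩ := (hρ.1.isWeakPlan_eigenvectorBasis.prod hσ.1.isWeakPlan_eigenvectorBasis hρ.2
    hσ.2).exists_tPlan
  ⟨Q⟩

section Minimization

variable {D : ℕ} {ρ σ : Matrix (Fin D) (Fin D) ℂ} {d : QV D → QV D → ℝ} {p : ℝ}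

lemma TPlan.exists_isWeakPlan_fin (Q : TPlan D ρ σ) {N : ℕ} (hN : Q.n ≤ N) {χ : QV D}
    (hχ : ‖χ‖ = 1) : ∃ (q : Fin N → ℝ) (ψ φ : Fin N → QV D),
      IsWeakPlan ρ σ q ψ φ ∧ ∀ d p, planCost d p q ψ φ = Tcost d p Q := by
  let e : Fin N ≃ Fin Q.n ⊕ Fin (N - Q.n) := (finCongr (by omega)).trans finSumFinEquiv.symm
  refine ⟨_, _, _, (Q.isWeakPlan.sumElim (χ := fun _ => χ) fun _ => hχ).comp_equiv e,
    fun d p => ?_⟩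
  rw [planCost_comp_equiv, planCost_sumElim_zero, TPlan.tcost_eq_planCost]

lemma isWeakPlan_iff {ι : Type*} [Fintype ι] {q : ι → ℝ} {ψ φ : ι → QV D} :
    IsWeakPlan ρ σ q ψ φ ↔ (∀ j, 0 ≤ q j) ∧ (∀ j, ‖ψ j‖ = 1) ∧ (∀ j, ‖φ j‖ = 1) ∧
      ∑ j, (q j : ℂ) • qproj (ψ j) = ρ ∧ ∑ j, (q j : ℂ) • qproj (φ j) = σ :=
  ⟨fun ⟨h₁, h₂, h₃, h₄, h₅⟩ => ⟨h₁, h₂, h₃, h₄, h₅⟩,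
    fun ⟨h₁, h₂, h₃, h₄, h₅⟩ => ⟨h₁, h₂, h₃, h₄, h₅⟩⟩

lemma isCompact_setOf_isWeakPlan (ρ σ : Matrix (Fin D) (Fin D) ℂ) (ι : Type*) [Fintype ι] :
    IsCompact {x : (ι → ℝ) × (ι → QV D) × (ι → QV D) | IsWeakPlan ρ σ x.1 x.2.1 x.2.2} := by
  have hclosed : IsClosed {x : (ι → ℝ) × (ι → QV D) × (ι → QV D) |
      IsWeakPlan ρ σ x.1 x.2.1 x.2.2} := by
    simp only [isWeakPlan_iff, Set.ofPred_and, Set.ofPred_forall]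
    refine (isClosed_iInter fun j => isClosed_le ?_ ?_).inter
      ((isClosed_iInter fun j => isClosed_eq ?_ ?_).inter
      ((isClosed_iInter fun j => isClosed_eq ?_ ?_).inter
      ((isClosed_eq ?_ ?_).inter (isClosed_eq ?_ ?_)))) <;> fun_prop
  refine ((isCompact_univ_pi fun _ => isCompact_Icc (a := 0) (b := ρ.trace.re)).prod
    ((isCompact_univ_pi fun _ => isCompact_sphere 0 1).prod
      (isCompact_univ_pi fun _ => isCompact_sphere 0 1))).of_isClosed_subset hclosed ?_
  rintro ⟨q, ψ, φ⟩ h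
  have hsum : ∑ j, q j = ρ.trace.re := by simpa using congrArg Complex.re h.sum_weights
  refine ⟨fun j _ => ⟨h.nonneg j, hsum ▸ Finset.single_le_sum (fun i _ => h.nonneg i)
    (Finset.mem_univ j)⟩, fun j _ => ?_, fun j _ => ?_⟩
  · simpa using h.norm_left j
  · simpa using h.norm_right j

lemma continuous_planCost {ι : Type*} [Fintype ι] (hd : Continuous fun x : QV D × QV D => d x.1 x.2)
    (hp : 0 ≤ p) :
    Continuous fun x : (ι → ℝ) × (ι → QV D) × (ι → QV D) => planCost d p x.1 x.2.1 x.2.2 := by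
  refine continuous_finsetSum _ fun j _ => ?_
  have hdj : Continuous fun x : (ι → ℝ) × (ι → QV D) × (ι → QV D) => d (x.2.1 j) (x.2.2 j) :=
    hd.comp (f := fun x : (ι → ℝ) × (ι → QV D) × (ι → QV D) => (x.2.1 j, x.2.2 j)) (by fun_prop)
  exact (continuous_apply j).comp continuous_fst |>.mul ((Real.continuous_rpow_const hp).comp hdj)

lemma Tcost_nonneg (hd : ∀ a b, 0 ≤ d a b) (Q : TPlan D ρ σ) : 0 ≤ Tcost d p Q :=
  Finset.sum_nonneg fun j _ => mul_nonneg (Q.q_pos j).le (Real.rpow_nonneg (hd _ _) p)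

lemma exists_tPlan_card_le_forall_Tcost_le (hd : Continuous fun x : QV D × QV D => d x.1 x.2)
    (hp : 0 ≤ p) (hD : 0 < D) [Nonempty (TPlan D ρ σ)] :
    ∃ Q : TPlan D ρ σ, Q.n ≤ 2 * D ^ 2 ∧ ∀ Q' : TPlan D ρ σ, Tcost d p Q ≤ Tcost d p Q' := by
  obtain ⟨χ, hχ⟩ : ∃ χ : QV D, ‖χ‖ = 1 :=
    haveI : Nonempty (Fin D) := ⟨⟨0, hD⟩⟩
    exists_norm_eq _ zero_le_one
  have hdom : ∀ Q : TPlan D ρ σ, ∃ x : (Fin (2 * D ^ 2) → ℝ) × (Fin (2 * D ^ 2) → QV D) ×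
      (Fin (2 * D ^ 2) → QV D), IsWeakPlan ρ σ x.1 x.2.1 x.2.2 ∧
        planCost d p x.1 x.2.1 x.2.2 ≤ Tcost d p Q := fun Q => by
    obtain ⟨Q', hQ'n, hQ'⟩ := Q.exists_card_le d p
    obtain ⟨q, ψ, φ, h, hcost⟩ := Q'.exists_isWeakPlan_fin hQ'n hχ
    exact ⟨(q, ψ, φ), h, (hcost d p).trans_le hQ'⟩
  obtain ⟨x, hx, -⟩ := hdom (Classical.arbitrary _)
  obtain ⟨x₀, hx₀, hmin⟩ := (isCompact_setOf_isWeakPlan ρ σ _).exists_isMinOn ⟨x, hx⟩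
    (continuous_planCost hd hp).continuousOn
  obtain ⟨Q, hQn, hQ⟩ := hx₀.exists_tPlan
  refine ⟨Q, hQn ▸ (Fintype.card_subtype_le _).trans (Fintype.card_fin _).le, fun Q' => ?_⟩
  obtain ⟨x, hx, hxQ'⟩ := hdom Q'
  exact (hQ d p).trans_le ((hmin hx).trans hxQ')

lemma rpow_Tcost_eq_Wp (hd : ∀ a b, 0 ≤ d a b) (hp : 0 ≤ p) {Q : TPlan D ρ σ}
    (hQ : ∀ Q' : TPlan D ρ σ, Tcost d p Q ≤ Tcost d p Q') : Tcost d p Q ^ (1 / p) = Wp d p ρ σ := by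
  refine (IsLeast.csInf_eq (s := {x | ∃ Q : TPlan D ρ σ, x = Tcost d p Q ^ (1 / p)})
    ⟨⟨Q, rfl⟩, ?_⟩).symm
  rintro _ ⟨Q', rfl⟩
  exact Real.rpow_le_rpow (Tcost_nonneg hd Q) (hQ Q') (by positivity)

end Minimization

theorem wasserstein_infimum_attained_general {D : ℕ} (d : QV D → QV D → ℝ)
    (hdnn : ∀ a b : QV D, 0 ≤ d a b)
    (hdcont : Continuous fun x : QV D × QV D => d x.1 x.2)
    (p : ℝ) (hp : 1 ≤ p)
    (ρ σ : Matrix (Fin D) (Fin D) ℂ) (hρ : IsDensity ρ) (hσ : IsDensity σ) :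
    ∃ Q : TPlan D ρ σ, Q.n ≤ 2 * D ^ 2 ∧ (Tcost d p Q) ^ (1 / p) = Wp d p ρ σ := by
  have hD : 0 < D := Nat.pos_of_ne_zero fun h => by subst h; simp [IsDensity] at hρ
  have := nonempty_tPlan hρ hσ
  obtain ⟨Q, hQn, hQ⟩ :=
    exists_tPlan_card_le_forall_Tcost_le (ρ := ρ) (σ := σ) hdcont (by linarith) hD
  exact ⟨Q, hQn, rpow_Tcost_eq_Wp hdnn (by linarith) hQ⟩

/-- For continuous `d`, the infimum defining `W_p^d` is attained by a transport
plan with at most `2D²` elements. -/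
theorem wasserstein_infimum_attained {D : ℕ} (d : QV D → QV D → ℝ)
    (hdnn : ∀ a b : QV D, 0 ≤ d a b) (hdsymm : ∀ a b : QV D, d a b = d b a)
    (hdcont : Continuous fun x : QV D × QV D => d x.1 x.2)
    (p : ℝ) (hp : 1 ≤ p)
    (ρ σ : Matrix (Fin D) (Fin D) ℂ) (hρ : IsDensity ρ) (hσ : IsDensity σ) :
    ∃ Q : TPlan D ρ σ, Q.n ≤ 2 * D ^ 2 ∧ (Tcost d p Q) ^ (1 / p) = Wp d p ρ σ :=
  wasserstein_infimum_attained_general d hdnn hdcont p hp ρ σ hρ hσ
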